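/- arXiv:2108.01987 — 8 statements merged into one kernel-verified Lean document; each statement's English description precedes it below -/
import Mathlib

section
/- In the strict-preferences model (every voter submits a linear order over candidates), an election is single-top-peaked if and only if it is top-monotonic. -/
/-!
Both properties are witnessed by the same axis `f` (with `rank i c` the position of `c` in voter
`i`'s order, lower being better). The first top-monotonicity clause is single-top-peakedness read
in both directions of the axis. For the second clause, let voter `i` prefer `a` to `b`, where the
top candidate `b` lies strictly between `a` and `c`. If `b` is `i`'s top there is nothing to show;
otherwise `i`'s top lies on one side of `b`, and single-top-peakedness puts `b` above everything
beyond `b` on the other side. That other side cannot contain `a`, so it contains `c`.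
-/

open Function

namespace TopMonotonic

variable {V C : Type*}

def Between (f : C → ℕ) (a b c : C) : Prop :=
  (f a < f b ∧ f b < f c) ∨ (f c < f b ∧ f b < f a)

section Between

variable {f : C → ℕ} {a b c : C}

theorem Between.symm (h : Between f a b c) : Between f c b a :=
  Or.symm h

theorem Between.ne_right (h : Between f a b c) : b ≠ c := by
  rintro rfl
  unfold Between at h
  omega

theorem Between.left_or_right {t : C} (h : Between f a b c) (ht : f t ≠ f b) :
    Between f t b c ∨ Between f a b t := by
  unfold Between at *
  omega

end Between

variable (rank : V → C → ℕ) (top : V → C)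

def IsSingleTopPeakedAxis (f : C → ℕ) : Prop :=
  ∀ a b c : C, f a < f b → f b < f c → (∃ j, top j = b) → ∀ i : V,
    (top i = a → rank i b < rank i c) ∧ (top i = c → rank i b < rank i a)

variable {rank top} {f : C → ℕ}

theorem IsSingleTopPeakedAxis.rank_lt_of_between (hf : IsSingleTopPeakedAxis rank top f)
    {a b c : C} (habc : Between f a b c) (hb : ∃ j, top j = b) {i : V} (hi : top i = a) :
    rank i b < rank i c := by
  rcases habc with ⟨hab, hbc⟩ | ⟨hcb, hba⟩
  · exact (hf a b c hab hbc hb i).1 hi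
  · exact (hf c b a hcb hba hb i).2 hi

theorem IsSingleTopPeakedAxis.rank_lt_of_between_of_rank_lt
    (htop : ∀ v c, c ≠ top v → rank v (top v) < rank v c)
    (hf : IsSingleTopPeakedAxis rank top f) (hinj : Injective f)
    {a b c : C} (habc : Between f a b c) (hb : ∃ j, top j = b) {i : V}
    (hab : rank i a < rank i b) : rank i b < rank i c := by
  by_cases hib : top i = b
  · simpa [hib] using htop i c (hib ▸ habc.ne_right.symm)
  · rcases habc.left_or_right (t := top i) (hinj.ne hib) with htbc | hatb
    · exact hf.rank_lt_of_between htbc hb rfl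
    · exact absurd hab (hf.rank_lt_of_between hatb.symm hb rfl).not_gt

theorem isSingleTopPeakedAxis_of_rank_lt_of_between
    (hf : ∀ (a b c : C) (i j : V), top i = a → top j = b → Between f a b c → rank i b < rank i c) :
    IsSingleTopPeakedAxis rank top f := by
  rintro a b c hab hbc ⟨j, hj⟩ i
  exact ⟨fun hi ↦ hf a b c i j hi hj (Or.inl ⟨hab, hbc⟩),
    fun hi ↦ hf c b a i j hi hj (Or.inr ⟨hab, hbc⟩)⟩

end TopMonotonic

theorem stp_iff_tm_general {V C : Type*}
    (rank : V → C → ℕ)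
    (top : V → C) (htop : ∀ v c, c ≠ top v → rank v (top v) < rank v c) :
    -- single-top-peaked
    (∃ f : C → ℕ, Injective f ∧ ∀ a b c : C, f a < f b → f b < f c →
        (∃ j, top j = b) → ∀ i : V,
          (top i = a → rank i b < rank i c) ∧ (top i = c → rank i b < rank i a))
    ↔
    -- top-monotonic
    (∃ f : C → ℕ, Injective f ∧
      (∀ (a b c : C) (i j : V), top i = a → top j = b →
        ((f a < f b ∧ f b < f c) ∨ (f c < f b ∧ f b < f a)) → rank i b < rank i c) ∧
      (∀ (a b c : C) (i j : V),
        (∃ v, top v = a) → (∃ v, top v = b) → (∃ v, top v = c) →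
        rank i a < rank i b → rank i a < rank i c →
        rank j b < rank j a → rank j b < rank j c →
        ((f a < f b ∧ f b < f c) ∨ (f c < f b ∧ f b < f a)) → rank i b < rank i c)) := by
  constructor
  · rintro ⟨f, hinj, hf⟩
    have hf : TopMonotonic.IsSingleTopPeakedAxis rank top f := hf
    exact ⟨f, hinj, fun a b c i j hi hj habc ↦ hf.rank_lt_of_between habc ⟨j, hj⟩ hi,
      fun a b c i j _ hb _ hab _ _ _ habc ↦ hf.rank_lt_of_between_of_rank_lt htop hinj habc hb hab⟩
  · rintro ⟨f, hinj, hf, -⟩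
    exact ⟨f, hinj, TopMonotonic.isSingleTopPeakedAxis_of_rank_lt_of_between hf⟩

/-- In the strict-preferences model, an election is single-top-peaked (STP)
iff it is top-monotonic (TM). Voters `V`, candidates `C`, `rank v c` is the
position of candidate `c` in voter `v`'s linear order (lower = better),
`top v` is `v`'s most preferred candidate. -/
theorem stp_iff_tm {V C : Type*} [Fintype V] [Fintype C]
    (rank : V → C → ℕ) (hinj : ∀ v, Injective (rank v))
    (top : V → C) (htop : ∀ v c, c ≠ top v → rank v (top v) < rank v c) :
    -- single-top-peaked
    (∃ f : C → ℕ, Injective f ∧ ∀ a b c : C, f a < f b → f b < f c →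
        (∃ j, top j = b) → ∀ i : V,
          (top i = a → rank i b < rank i c) ∧ (top i = c → rank i b < rank i a))
    ↔
    -- top-monotonic
    (∃ f : C → ℕ, Injective f ∧
      (∀ (a b c : C) (i j : V), top i = a → top j = b →
        ((f a < f b ∧ f b < f c) ∨ (f c < f b ∧ f b < f a)) → rank i b < rank i c) ∧
      (∀ (a b c : C) (i j : V),
        (∃ v, top v = a) → (∃ v, top v = b) → (∃ v, top v = c) →
        rank i a < rank i b → rank i a < rank i c →
        rank j b < rank j a → rank j b < rank j c →
        ((f a < f b ∧ f b < f c) ∨ (f c < f b ∧ f b < f a)) → rank i b < rank i c)) :=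
  stp_iff_tm_general rank top htop
end

section
/- In the strict-preferences model, an election is single-top-peaked if and only if it is single-top-crossing. -/
/-!
Sorting the voters by the position of their top candidate in a single-top-peaked order, with ties
broken arbitrarily, gives a single-top-crossing order: a voter `x` who prefers `a` to the top of a
later voter `y` forces `a` to lie beyond `top y` on the side away from `top x`, and then every voter
after `y` prefers `top y` to `a`.

Conversely, along a single-top-crossing order the voters sharing a top candidate form consecutive
blocks, and the top candidates are ordered like their blocks. A candidate `a` that is nobody's top
is inserted just before `top y`, where `y` is the first voter such that some earlier voter prefers
`a` to `top y`.
-/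

open Function

def IsSingleTopPeakedBy {V C : Type*} (rank : V → C → ℕ) (top : V → C) (f : C → ℕ) : Prop :=
  ∀ a b c : C, f a < f b → f b < f c → (∃ j, top j = b) → ∀ i : V,
    (top i = a → rank i b < rank i c) ∧ (top i = c → rank i b < rank i a)

def IsSingleTopCrossingBy {V C : Type*} (rank : V → C → ℕ) (top : V → C) (g : V → ℕ) : Prop :=
  ∀ x y z : V, g x < g y → g y < g z →
    ∀ a : C, rank x a < rank x (top y) → rank z (top y) < rank z a

theorem Finite.exists_injective_refining {α : Type*} [Finite α] (k : α → ℕ) :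
    ∃ g : α → ℕ, Injective g ∧ ∀ x y, g x < g y → k x ≤ k y := by
  obtain ⟨n, ⟨e⟩⟩ := Finite.exists_equiv_fin α
  have he : ∀ x, (e x : ℕ) < n := fun x => (e x).isLt
  refine ⟨fun x => e x + n * k x, fun x y hxy => ?_, fun x y hxy => ?_⟩
  · have hmod : (e x : ℕ) = e y := by
      simpa [Nat.add_mul_mod_self_left, Nat.mod_eq_of_lt (he _)] using congrArg (· % n) hxy
    exact e.injective (Fin.ext hmod)
  · by_contra! h
    have := he y
    nlinarith

section

variable {V C : Type*} {rank : V → C → ℕ} {top : V → C}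

lemma not_rank_lt_rank_top (htop : ∀ v c, c ≠ top v → rank v (top v) < rank v c) (v : V) (c : C) :
    ¬ rank v c < rank v (top v) := by
  rcases eq_or_ne c (top v) with rfl | hc
  · exact lt_irrefl _
  · exact (htop v c hc).asymm

lemma IsSingleTopPeakedBy.isSingleTopCrossingBy_comp {f : C → ℕ} (hf : Injective f)
    (h : IsSingleTopPeakedBy rank top f) : IsSingleTopCrossingBy rank top (f ∘ top) := by
  intro x y z hxy hyz a ha
  have hay : f a ≠ f (top y) := fun e => ha.ne (congrArg _ (hf e))
  rcases hay.lt_or_gt with hay | hay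
  · exact (h a (top y) (top z) hay hyz ⟨y, rfl⟩ z).2 rfl
  · exact absurd ha ((h (top x) (top y) a hxy hay ⟨y, rfl⟩ x).1 rfl).asymm

lemma IsSingleTopCrossingBy.of_refines (htop : ∀ v c, c ≠ top v → rank v (top v) < rank v c)
    {k g : V → ℕ} (hk : IsSingleTopCrossingBy rank top k)
    (hk_top : ∀ x y, k x = k y → top x = top y) (hg : ∀ x y, g x < g y → k x ≤ k y) :
    IsSingleTopCrossingBy rank top g := by
  intro x y z hxy hyz a ha
  have hay : a ≠ top y := by rintro rfl; exact lt_irrefl _ ha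
  have hxy' : k x < k y := (hg x y hxy).lt_of_ne fun e =>
    not_rank_lt_rank_top htop x a (hk_top x y e ▸ ha)
  rcases (hg y z hyz).lt_or_eq with hyz' | hyz'
  · exact hk x y z hxy' hyz' a ha
  · have hzy := hk_top y z hyz'
    exact hzy ▸ htop z a (hzy ▸ hay)

lemma IsSingleTopPeakedBy.of_refines {k f : C → ℕ} (hk : IsSingleTopPeakedBy rank top k)
    (hk_top : ∀ a v, k a = k (top v) → a = top v) (hf : ∀ a b, f a < f b → k a ≤ k b) :
    IsSingleTopPeakedBy rank top f := by
  rintro a b c hab hbc ⟨j, rfl⟩ i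
  refine hk a (top j) c ((hf _ _ hab).lt_of_ne ?_) ((hf _ _ hbc).lt_of_ne ?_) ⟨j, rfl⟩ i
  · intro e
    rw [hk_top a j e] at hab
    exact lt_irrefl _ hab
  · intro e
    rw [hk_top c j e.symm] at hbc
    exact lt_irrefl _ hbc

end

section

variable {V C : Type*} (rank : V → C → ℕ) (top : V → C) (g : V → ℕ)

def BeatsTopEarlier (a : C) (y : V) : Prop :=
  ∃ x, g x < g y ∧ rank x a < rank x (top y)

/-- `N`, meant to exceed every `g v`, stands for "no such voter". -/
noncomputable def firstBeat (N : ℕ) (a : C) : ℕ :=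
  sInf ({n | ∃ y, BeatsTopEarlier rank top g a y ∧ g y = n} ∪ {N})

/-- For a top candidate `c`, `firstBeat c` is the first voter after the block of `c`; a candidate
`a` that is nobody's top gets the odd key `2 * firstBeat a + 1`, which places it right after the
top candidate whose block ends at `firstBeat a`. -/
noncomputable def stpKey (N : ℕ) (a : C) : ℕ :=
  open Classical in
  2 * firstBeat rank top g N a + if a ∈ Set.range top then 0 else 1

variable {rank top g} {N : ℕ}

lemma firstBeat_le_of_beatsTopEarlier {a : C} {y : V} (h : BeatsTopEarlier rank top g a y) :
    firstBeat rank top g N a ≤ g y :=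
  Nat.sInf_le (Or.inl ⟨y, h, rfl⟩)

lemma firstBeat_le (a : C) : firstBeat rank top g N a ≤ N :=
  Nat.sInf_le (Or.inr rfl)

lemma exists_beatsTopEarlier_of_firstBeat_lt {a : C} (h : firstBeat rank top g N a < N) :
    ∃ y, BeatsTopEarlier rank top g a y ∧ g y = firstBeat rank top g N a := by
  rcases Nat.sInf_mem (⟨N, Or.inr rfl⟩ :
      ({n | ∃ y, BeatsTopEarlier rank top g a y ∧ g y = n} ∪ {N} : Set ℕ).Nonempty) with h' | h'
  · exact h'
  · exact absurd h' h.ne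

lemma BeatsTopEarlier.mono (htop : ∀ v c, c ≠ top v → rank v (top v) < rank v c)
    (hstc : IsSingleTopCrossingBy rank top g) {a : C} {y z : V}
    (h : BeatsTopEarlier rank top g a y) (hyz : g y < g z) : BeatsTopEarlier rank top g a z := by
  obtain ⟨x, hxy, hx⟩ := h
  refine ⟨x, hxy.trans hyz, hx.trans_le ?_⟩
  by_contra! hzy
  exact not_rank_lt_rank_top htop z _ (hstc x y z hxy hyz _ hzy)

lemma not_beatsTopEarlier_top (htop : ∀ v c, c ≠ top v → rank v (top v) < rank v c)
    (hstc : IsSingleTopCrossingBy rank top g) (hg : Injective g) {v y : V} (hyv : g y ≤ g v) :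
    ¬ BeatsTopEarlier rank top g (top v) y := by
  rintro ⟨x, hxy, hx⟩
  rcases hyv.lt_or_eq with hyv | hyv
  · exact not_rank_lt_rank_top htop v _ (hstc x y v hxy hyv _ hx)
  · rw [hg hyv] at hx
    exact lt_irrefl _ hx

lemma lt_firstBeat_top (htop : ∀ v c, c ≠ top v → rank v (top v) < rank v c)
    (hstc : IsSingleTopCrossingBy rank top g) (hg : Injective g) (hN : ∀ v, g v < N) (v : V) :
    g v < firstBeat rank top g N (top v) := by
  by_contra! h
  obtain ⟨y, hy, hyq⟩ := exists_beatsTopEarlier_of_firstBeat_lt (h.trans_lt (hN v))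
  exact not_beatsTopEarlier_top htop hstc hg (hyq ▸ h) hy

lemma firstBeat_top_le (htop : ∀ v c, c ≠ top v → rank v (top v) < rank v c)
    (hg : Injective g) {v y : V} (hvy : g v ≤ g y) (hne : top v ≠ top y) :
    firstBeat rank top g N (top v) ≤ g y := by
  rcases hvy.lt_or_eq with hvy | hvy
  · exact firstBeat_le_of_beatsTopEarlier ⟨v, hvy, htop v (top y) hne.symm⟩
  · exact absurd (congrArg top (hg hvy)) hne

lemma firstBeat_top_lt_of_lt (htop : ∀ v c, c ≠ top v → rank v (top v) < rank v c)
    (hstc : IsSingleTopCrossingBy rank top g) (hg : Injective g) (hN : ∀ v, g v < N) {v w : V}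
    (hvw : g v < g w) (hne : top v ≠ top w) :
    firstBeat rank top g N (top v) < firstBeat rank top g N (top w) :=
  (firstBeat_top_le htop hg hvw.le hne).trans_lt (lt_firstBeat_top htop hstc hg hN w)

lemma lt_of_firstBeat_top_lt (htop : ∀ v c, c ≠ top v → rank v (top v) < rank v c)
    (hstc : IsSingleTopCrossingBy rank top g) (hg : Injective g) (hN : ∀ v, g v < N) {v w : V}
    (h : firstBeat rank top g N (top v) < firstBeat rank top g N (top w)) : g v < g w := by
  by_contra! hwv
  have hne : top w ≠ top v := fun e => h.ne (by rw [e])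
  have := firstBeat_top_le (N := N) htop hg hwv hne
  have := lt_firstBeat_top htop hstc hg hN v
  omega

lemma stpKey_top (v : V) : stpKey rank top g N (top v) = 2 * firstBeat rank top g N (top v) := by
  simp [stpKey]

lemma two_mul_firstBeat_le_stpKey (a : C) :
    2 * firstBeat rank top g N a ≤ stpKey rank top g N a :=
  Nat.le_add_right _ _

lemma stpKey_le (a : C) : stpKey rank top g N a ≤ 2 * firstBeat rank top g N a + 1 := by
  unfold stpKey
  split_ifs <;> omega

lemma eq_top_of_stpKey_eq (htop : ∀ v c, c ≠ top v → rank v (top v) < rank v c)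
    (hstc : IsSingleTopCrossingBy rank top g) (hg : Injective g) (hN : ∀ v, g v < N)
    {a : C} {v : V} (h : stpKey rank top g N a = stpKey rank top g N (top v)) : a = top v := by
  rw [stpKey_top] at h
  by_cases ha : a ∈ Set.range top
  · obtain ⟨w, rfl⟩ := ha
    rw [stpKey_top] at h
    by_contra hne
    have hwv : g w ≠ g v := hg.ne fun e => hne (congrArg top e)
    rcases hwv.lt_or_gt with hwv | hwv
    · have := firstBeat_top_lt_of_lt htop hstc hg hN hwv hne
      omega
    · have := firstBeat_top_lt_of_lt htop hstc hg hN hwv (Ne.symm hne)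
      omega
  · simp only [stpKey, ha, if_false] at h
    omega

lemma rank_lt_of_stpKey_top_lt_stpKey_top_lt (hinj : ∀ v, Injective (rank v))
    (htop : ∀ v c, c ≠ top v → rank v (top v) < rank v c)
    (hstc : IsSingleTopCrossingBy rank top g) (hg : Injective g) (hN : ∀ v, g v < N)
    {c : C} {i y : V} (hiy : stpKey rank top g N (top i) < stpKey rank top g N (top y))
    (hyc : stpKey rank top g N (top y) < stpKey rank top g N c) :
    rank i (top y) < rank i c := by
  have hyc' := hyc.trans_le (stpKey_le c)
  rw [stpKey_top, stpKey_top] at hiy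
  rw [stpKey_top] at hyc'
  have hi : g i < g y := lt_of_firstBeat_top_lt htop hstc hg hN (by omega)
  have hne : c ≠ top y := by
    rintro rfl
    exact lt_irrefl _ hyc
  by_contra! hci
  have hci : rank i c < rank i (top y) := hci.lt_of_ne fun e => hne (hinj i e)
  have := firstBeat_le_of_beatsTopEarlier (N := N) ⟨i, hi, hci⟩
  have := lt_firstBeat_top htop hstc hg hN y
  omega

lemma rank_lt_of_stpKey_lt_stpKey_top_lt (htop : ∀ v c, c ≠ top v → rank v (top v) < rank v c)
    (hstc : IsSingleTopCrossingBy rank top g) (hg : Injective g) (hN : ∀ v, g v < N)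
    {a : C} {i y : V} (hay : stpKey rank top g N a < stpKey rank top g N (top y))
    (hyi : stpKey rank top g N (top y) < stpKey rank top g N (top i)) :
    rank i (top y) < rank i a := by
  have hay' : firstBeat rank top g N a < firstBeat rank top g N (top y) := by
    have := (two_mul_firstBeat_le_stpKey a).trans_lt hay
    rw [stpKey_top] at this
    omega
  rw [stpKey_top, stpKey_top] at hyi
  have hyi' : g y < g i := lt_of_firstBeat_top_lt htop hstc hg hN (by omega)
  have hne : top y ≠ top i := fun e => by rw [e] at hyi; omega
  obtain ⟨w, hbeat, hw⟩ := exists_beatsTopEarlier_of_firstBeat_lt (hay'.trans_le (firstBeat_le _))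
  obtain ⟨u, hu, hui, hbeat⟩ : ∃ u, top u = top y ∧ g u < g i ∧ BeatsTopEarlier rank top g a u := by
    by_cases hwy : top w = top y
    · have := firstBeat_top_le (N := N) htop hg hyi'.le hne
      exact ⟨w, hwy, by omega, hbeat⟩
    · have hwy' : g w < g y := by
        by_contra! hyw
        have := firstBeat_top_le (N := N) htop hg hyw (Ne.symm hwy)
        omega
      exact ⟨y, rfl, hyi', hbeat.mono htop hstc hwy'⟩
  obtain ⟨x, hxu, hx⟩ := hbeat
  exact hu ▸ hstc x u i hxu hui a hx

lemma isSingleTopPeakedBy_stpKey (hinj : ∀ v, Injective (rank v))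
    (htop : ∀ v c, c ≠ top v → rank v (top v) < rank v c)
    (hstc : IsSingleTopCrossingBy rank top g) (hg : Injective g) (hN : ∀ v, g v < N) :
    IsSingleTopPeakedBy rank top (stpKey rank top g N) := by
  rintro a b c hab hbc ⟨y, rfl⟩ i
  constructor
  · rintro rfl
    exact rank_lt_of_stpKey_top_lt_stpKey_top_lt hinj htop hstc hg hN hab hbc
  · rintro rfl
    exact rank_lt_of_stpKey_lt_stpKey_top_lt htop hstc hg hN hab hbc

end

/-- In the strict-preferences model, an election is single-top-peaked (STP)
iff it is single-top-crossing (STC). `rank v c` is the position of candidate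
`c` in voter `v`'s linear order (lower = better), `top v` is `v`'s favourite. -/
theorem stp_iff_stc {V C : Type*} [Fintype V] [Fintype C]
    (rank : V → C → ℕ) (hinj : ∀ v, Injective (rank v))
    (top : V → C) (htop : ∀ v c, c ≠ top v → rank v (top v) < rank v c) :
    -- single-top-peaked
    (∃ f : C → ℕ, Injective f ∧ ∀ a b c : C, f a < f b → f b < f c →
        (∃ j, top j = b) → ∀ i : V,
          (top i = a → rank i b < rank i c) ∧ (top i = c → rank i b < rank i a))
    ↔
    -- single-top-crossing
    (∃ g : V → ℕ, Injective g ∧ ∀ x y z : V, g x < g y → g y < g z →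
        ∀ a : C, rank x a < rank x (top y) → rank z (top y) < rank z a) := by
  constructor
  · rintro ⟨f, hf, hstp⟩
    obtain ⟨g, hg, hgf⟩ := Finite.exists_injective_refining (f ∘ top)
    exact ⟨g, hg, (IsSingleTopPeakedBy.isSingleTopCrossingBy_comp hf hstp).of_refines htop
      (fun x y e => hf e) hgf⟩
  · rintro ⟨g, hg, hstc⟩
    obtain ⟨N, hN⟩ := Finite.exists_le g
    have hN' : ∀ v, g v < N + 1 := fun v => Nat.lt_succ_of_le (hN v)
    obtain ⟨f, hf, hfk⟩ := Finite.exists_injective_refining (stpKey rank top g (N + 1))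
    exact ⟨f, hf, (isSingleTopPeakedBy_stpKey hinj htop hstc hg hN').of_refines
      (fun a v => eq_top_of_stpKey_eq htop hstc hg hN') hfk⟩
end

section
/- Every voter-interval (VI) approval election is linearly consistent (LC). -/
/-!
Order the voters along the voter-interval axis and each candidate by the position of the first
voter approving it, breaking ties arbitrarily. If `i` precedes `j`, `a` precedes `b`, `i` approves `b` and `j`
approves `a`, then the first approver `w` of `a` sits at or before the first approver of `b`,
hence at or before `i`; so `i` lies between `w` and `j`, both of which approve `a`, and the
interval property makes `i` approve `a`.
-/

open Function

theorem Finite.exists_injective_nat_lt_of_lt {C : Type*} [Finite C] (l : C → ℕ) :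
    ∃ h : C → ℕ, Injective h ∧ ∀ a b, l a < l b → h a < h b := by
  obtain ⟨n, ⟨e⟩⟩ := Finite.exists_equiv_fin C
  have refines : ∀ a b, l a < l b → n * l a + e a < n * l b + e b := fun a b hab =>
    calc n * l a + e a < n * (l a + 1) := by rw [mul_add_one]; exact Nat.add_lt_add_left (e a).2 _
      _ ≤ n * l b := Nat.mul_le_mul_left n hab
      _ ≤ n * l b + e b := Nat.le_add_right _ _
  refine ⟨fun c => n * l c + e c, fun a b hab => ?_, refines⟩
  have hl : l a = l b := by
    rcases lt_trichotomy (l a) (l b) with hlt | heq | hgt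
    · exact absurd hab (refines a b hlt).ne
    · exact heq
    · exact absurd hab (refines b a hgt).ne'
  simp only [hl, Nat.add_left_cancel_iff] at hab
  exact e.injective (Fin.ext hab)

section VoterInterval

variable {V C : Type*} (g : V → ℕ) (app : V → C → Prop)

def IsVoterInterval : Prop :=
  ∀ (v1 v2 v3 : V) (c : C), g v1 < g v2 → g v2 < g v3 → app v1 c → app v3 c → app v2 c

/-- Junk value `0` if nobody approves `c`. -/
noncomputable def firstApprover (c : C) : ℕ :=
  sInf (g '' {v | app v c})

variable {g app}

theorem firstApprover_le {v : V} {c : C} (h : app v c) : firstApprover g app c ≤ g v :=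
  Nat.sInf_le ⟨v, h, rfl⟩

theorem exists_approves_eq_firstApprover {v : V} {c : C} (h : app v c) :
    ∃ w, app w c ∧ g w = firstApprover g app c :=
  Nat.sInf_mem (s := g '' {v | app v c}) ⟨g v, v, h, rfl⟩

theorem IsVoterInterval.approves_of_firstApprover_le (hVI : IsVoterInterval g app)
    (hg : Injective g) {i j : V} {a b : C} (hij : g i < g j)
    (hab : firstApprover g app a ≤ firstApprover g app b) (hib : app i b) (hja : app j a) :
    app i a := by
  obtain ⟨w, hwa, hw⟩ := exists_approves_eq_firstApprover (g := g) hja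
  have hwi : g w ≤ g i := hw ▸ hab.trans (firstApprover_le hib)
  rcases hwi.lt_or_eq with hlt | heq
  · exact hVI w i j a hlt hij hwa hja
  · exact hg heq ▸ hwa

end VoterInterval

theorem vi_implies_lc_general {V C : Type*} [Fintype C]
    (app : V → C → Prop)
    (hVI : ∃ g : V → ℕ, Injective g ∧ ∀ (v1 v2 v3 : V) (c : C),
      g v1 < g v2 → g v2 < g v3 → app v1 c → app v3 c → app v2 c) :
    ∃ f : V ⊕ C → ℕ, Injective f ∧ ∀ (i j : V) (a b : C),
      f (Sum.inl i) < f (Sum.inl j) → f (Sum.inr a) < f (Sum.inr b) →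
      app i b → app j a → app i a := by
  obtain ⟨g, hg, hVI⟩ := hVI
  obtain ⟨h, hh, hrefines⟩ := Finite.exists_injective_nat_lt_of_lt (firstApprover g app)
  -- voters on the even numbers, candidates on the odd ones
  refine ⟨Equiv.natSumNatEquivNat ∘ Sum.map g h,
    Equiv.natSumNatEquivNat.injective.comp (hg.sumMap hh), fun i j a b hij hab hib hja => ?_⟩
  simp only [comp_apply, Sum.map_inl, Sum.map_inr, Equiv.natSumNatEquivNat_apply, Sum.elim_inl,
    Sum.elim_inr] at hij hab
  exact IsVoterInterval.approves_of_firstApprover_le hVI hg (by omega)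
    (not_lt.mp fun hba => (hrefines b a hba).not_gt (by omega)) hib hja

/-- Every voter-interval (VI) approval election is linearly consistent (LC).
`app v c` means voter `v` approves candidate `c`. -/
theorem vi_implies_lc {V C : Type*} [Fintype V] [Fintype C]
    (app : V → C → Prop)
    (hVI : ∃ g : V → ℕ, Injective g ∧ ∀ (v1 v2 v3 : V) (c : C),
      g v1 < g v2 → g v2 < g v3 → app v1 c → app v3 c → app v2 c) :
    ∃ f : V ⊕ C → ℕ, Injective f ∧ ∀ (i j : V) (a b : C),
      f (Sum.inl i) < f (Sum.inl j) → f (Sum.inr a) < f (Sum.inr b) →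
      app i b → app j a → app i a :=
  vi_implies_lc_general app hVI
end

section
/- Every candidate-interval (CI) approval election is linearly consistent (LC). -/
/-!
Order the candidates along the CI axis and each voter by the leftmost candidate it approves,
breaking ties arbitrarily. If `i` precedes `j`, `a` precedes `b`, `i` approves `b` and `j`
approves `a`, then the leftmost candidate approved by `i` lies weakly left of the one approved
by `j`, hence weakly left of `a`; since `i` approves an interval containing it and `b`, it
approves `a`. Voters and candidates are then merged into one order by parity.
-/

open Function

lemma exists_injective_lt_imp_le {V : Type*} [Finite V] (L : V → ℕ) :
    ∃ p : V → ℕ, Injective p ∧ ∀ i j, p i < p j → L i ≤ L j := by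
  obtain ⟨n, ⟨e⟩⟩ := Finite.exists_equiv_fin V
  refine ⟨fun i => n * L i + e i, fun i j hij => e.injective (Fin.ext ?_), fun i j hij => ?_⟩
  · simpa only [Nat.mul_add_mod, Nat.mod_eq_of_lt (e _).isLt] using congrArg (· % n) hij
  · have hn : 0 < n := (e i).pos
    simpa only [Nat.mul_add_div hn, Nat.div_eq_of_lt (e _).isLt, add_zero] using
      Nat.div_le_div_right (c := n) hij.le

lemma exists_injective_sum_lt_iff {V C : Type*} {p : V → ℕ} {q : C → ℕ}
    (hp : Injective p) (hq : Injective q) :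
    ∃ f : V ⊕ C → ℕ, Injective f ∧ (∀ i j, f (.inl i) < f (.inl j) ↔ p i < p j) ∧
      ∀ a b, f (.inr a) < f (.inr b) ↔ q a < q b := by
  refine ⟨Equiv.natSumNatEquivNat ∘ Sum.map p q,
    Equiv.natSumNatEquivNat.injective.comp (hp.sumMap hq), ?_, ?_⟩ <;>
  · intro x y
    simp only [comp_apply, Sum.map_inl, Sum.map_inr, Equiv.natSumNatEquivNat_apply,
      Sum.elim_inl, Sum.elim_inr]
    omega

section LeftEnd

variable {V C : Type*} (app : V → C → Prop) (g : C → ℕ)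

/-- `0` when `i` approves nobody, the junk value of `sInf ∅`. -/
noncomputable def leftEnd (i : V) : ℕ := sInf (g '' {c | app i c})

variable {app g}

lemma leftEnd_le {i : V} {c : C} (h : app i c) : leftEnd app g i ≤ g c :=
  Nat.sInf_le ⟨c, h, rfl⟩

lemma exists_app_eq_leftEnd {i : V} {c : C} (h : app i c) :
    ∃ c₀, app i c₀ ∧ g c₀ = leftEnd app g i :=
  Nat.sInf_mem (s := g '' {c | app i c}) ⟨g c, c, h, rfl⟩

lemma app_of_leftEnd_le (hg : Injective g)
    (hCI : ∀ (i : V) (a b c : C), g a < g b → g b < g c → app i a → app i c → app i b)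
    {i j : V} {a b : C} (hij : leftEnd app g i ≤ leftEnd app g j) (hab : g a < g b)
    (hib : app i b) (hja : app j a) : app i a := by
  obtain ⟨c₀, hic₀, hc₀⟩ := exists_app_eq_leftEnd (g := g) hib
  have hc₀a : g c₀ ≤ g a := hc₀ ▸ hij.trans (leftEnd_le hja)
  rcases hc₀a.eq_or_lt with heq | hlt
  · exact hg heq ▸ hic₀
  · exact hCI i c₀ a b hlt hab hic₀ hib

end LeftEnd

theorem ci_implies_lc_general {V C : Type*} [Fintype V]
    (app : V → C → Prop)
    (hCI : ∃ g : C → ℕ, Injective g ∧ ∀ (i : V) (a b c : C),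
      g a < g b → g b < g c → app i a → app i c → app i b) :
    ∃ f : V ⊕ C → ℕ, Injective f ∧ ∀ (i j : V) (a b : C),
      f (Sum.inl i) < f (Sum.inl j) → f (Sum.inr a) < f (Sum.inr b) →
      app i b → app j a → app i a := by
  obtain ⟨g, hg, hCI⟩ := hCI
  obtain ⟨p, hp, hpL⟩ := exists_injective_lt_imp_le (leftEnd app g)
  obtain ⟨f, hf, hfV, hfC⟩ := exists_injective_sum_lt_iff hp hg
  exact ⟨f, hf, fun i j a b hij hab hib hja =>
    app_of_leftEnd_le hg hCI (hpL i j ((hfV i j).1 hij)) ((hfC a b).1 hab) hib hja⟩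

/-- Every candidate-interval (CI) approval election is linearly consistent (LC).
`app v c` means voter `v` approves candidate `c`. -/
theorem ci_implies_lc {V C : Type*} [Fintype V] [Fintype C]
    (app : V → C → Prop)
    (hCI : ∃ g : C → ℕ, Injective g ∧ ∀ (i : V) (a b c : C),
      g a < g b → g b < g c → app i a → app i c → app i b) :
    ∃ f : V ⊕ C → ℕ, Injective f ∧ ∀ (i j : V) (a b : C),
      f (Sum.inl i) < f (Sum.inl j) → f (Sum.inr a) < f (Sum.inr b) →
      app i b → app j a → app i a :=
  ci_implies_lc_general app hCI
end

section
/- Every linearly consistent (LC) approval election is seemingly single-crossing (SSC). -/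
/-!
Order the voters as the LC witness does. If the witness puts candidate `a` before `b`, a voter `i`
approving `a` but not `b` precedes every voter `j` approving `b` but not `a`: were `j` before `i`,
consistency applied to `j` (approving `b`) and `i` (approving `a`) would make `j` approve `a`.
-/

open Function

section LinearConsistency

variable {V C α : Type*} [LinearOrder α]

def IsConsistentRanking (app : V → C → Prop) (f : V ⊕ C → α) : Prop :=
  ∀ (i j : V) (a b : C), f (.inl i) < f (.inl j) → f (.inr a) < f (.inr b) →
    app i b → app j a → app i a

theorem IsConsistentRanking.voter_lt_of_candidate_lt {app : V → C → Prop} {f : V ⊕ C → α}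
    (hf : Injective f) (hcons : IsConsistentRanking app f) {a b : C}
    (hab : f (.inr a) < f (.inr b)) {i j : V} (hia : app i a) (hib : ¬ app i b)
    (hjb : app j b) (hja : ¬ app j a) : f (.inl i) < f (.inl j) := by
  by_contra! hji
  rcases hji.eq_or_lt with hji | hji
  · cases Sum.inl_injective (hf hji)
    exact hib hjb
  · exact hja (hcons j i a b hji hab hjb hia)

end LinearConsistency

theorem lc_implies_ssc_general {V C : Type*}
    (app : V → C → Prop)
    (hLC : ∃ f : V ⊕ C → ℕ, Injective f ∧ ∀ (i j : V) (a b : C),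
      f (Sum.inl i) < f (Sum.inl j) → f (Sum.inr a) < f (Sum.inr b) →
      app i b → app j a → app i a) :
    ∃ g : V → ℕ, Injective g ∧ ∀ a b : C,
      (∀ i j : V, app i a → ¬ app i b → app j b → ¬ app j a → g i < g j) ∨
      (∀ i j : V, app i a → ¬ app i b → app j b → ¬ app j a → g j < g i) := by
  obtain ⟨f, hf, hcons⟩ := hLC
  refine ⟨f ∘ Sum.inl, hf.comp Sum.inl_injective, fun a b => ?_⟩
  rcases lt_trichotomy (f (.inr a)) (f (.inr b)) with hab | hab | hba
  · exact .inl fun i j hia hib hjb hja =>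
      IsConsistentRanking.voter_lt_of_candidate_lt hf hcons hab hia hib hjb hja
  · cases Sum.inr_injective (hf hab)
    exact .inl fun i _ hia hib => absurd hia hib
  · exact .inr fun i j hia hib hjb hja =>
      IsConsistentRanking.voter_lt_of_candidate_lt hf hcons hba hjb hja hia hib

/-- Every linearly consistent (LC) approval election is seemingly single-crossing (SSC). -/
theorem lc_implies_ssc {V C : Type*} [Fintype V] [Fintype C]
    (app : V → C → Prop)
    (hLC : ∃ f : V ⊕ C → ℕ, Injective f ∧ ∀ (i j : V) (a b : C),
      f (Sum.inl i) < f (Sum.inl j) → f (Sum.inr a) < f (Sum.inr b) →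
      app i b → app j a → app i a) :
    ∃ g : V → ℕ, Injective g ∧ ∀ a b : C,
      (∀ i j : V, app i a → ¬ app i b → app j b → ¬ app j a → g i < g j) ∨
      (∀ i j : V, app i a → ¬ app i b → app j b → ¬ app j a → g j < g i) :=
  lc_implies_ssc_general app hLC
end

section
/- There exists a seemingly single-crossing approval election that is not linearly consistent: namely the election with three voters v1, v2, v3 and three candidates a, b, c, where v1 approves {a, c}, v2 approves {a, b}, and v3 approves {b, c}, is SSC but not LC. -/
open Function

/-- The approval election with voters `v0, v1, v2` (elements of `Fin 3`) and
candidates `a = 0`, `b = 1`, `c = 2` (elements of `Fin 3`), where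
`v0` approves `{a, c}`, `v1` approves `{a, b}` and `v2` approves `{b, c}`:
voter `i` approves candidate `x` iff `x ≠ i + 1`. -/
def app5 (v x : Fin 3) : Prop := x ≠ v + 1

/-!
Order the voters by `Fin.val`; single-crossingness is then a finite check.

For LC, suppose voter `i` is not the top voter, say `i ⊏ i'`. Then `i'` approves the candidate
`i + 1` that `i` rejects, so LC forces `i + 1` above every candidate that `i` approves, i.e. above
all other candidates. Two of the three voters are not on top, and they reject different
candidates, which cannot both be the top candidate.
-/

theorem lt_of_linearlyConsistent {V C : Type*} {app : V → C → Prop} {f : V ⊕ C → ℕ}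
    (hf : Injective f)
    (hlc : ∀ i j a b, f (.inl i) < f (.inl j) → f (.inr a) < f (.inr b) →
      app i b → app j a → app i a)
    {i j : V} {a b : C} (hij : f (.inl i) < f (.inl j))
    (hia : ¬ app i a) (hja : app j a) (hib : app i b) :
    f (.inr b) < f (.inr a) := by
  rcases lt_trichotomy (f (.inr a)) (f (.inr b)) with hab | hab | hab
  · exact absurd (hlc i j a b hij hab hib hja) hia
  · exact absurd (Sum.inr_injective (hf hab) ▸ hib) hia
  · exact hab

instance : DecidableRel app5 := fun v x => inferInstanceAs (Decidable (x ≠ v + 1))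

theorem app5_seeminglySingleCrossing : ∀ a b : Fin 3,
    (∀ i j : Fin 3, app5 i a → ¬ app5 i b → app5 j b → ¬ app5 j a → i.val < j.val) ∨
    (∀ i j : Fin 3, app5 i a → ¬ app5 i b → app5 j b → ¬ app5 j a → j.val < i.val) := by
  decide

/-- This election is seemingly single-crossing (SSC) but not linearly consistent (LC). -/
theorem ssc_not_lc :
    (∃ g : Fin 3 → ℕ, Injective g ∧ ∀ a b : Fin 3,
      (∀ i j : Fin 3, app5 i a → ¬ app5 i b → app5 j b → ¬ app5 j a → g i < g j) ∨
      (∀ i j : Fin 3, app5 i a → ¬ app5 i b → app5 j b → ¬ app5 j a → g j < g i)) ∧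
    ¬ (∃ f : Fin 3 ⊕ Fin 3 → ℕ, Injective f ∧ ∀ (i j a b : Fin 3),
      f (Sum.inl i) < f (Sum.inl j) → f (Sum.inr a) < f (Sum.inr b) →
      app5 i b → app5 j a → app5 i a) := by
  refine ⟨⟨Fin.val, Fin.val_injective, app5_seeminglySingleCrossing⟩, ?_⟩
  rintro ⟨f, hf, hlc⟩
  obtain ⟨m, hm⟩ := Finite.exists_max fun v => f (.inl v)
  have below_top : ∀ k : Fin 3, k ≠ 0 → f (.inl (m + k)) < f (.inl m) := fun k hk =>
    (hm _).lt_of_ne fun e => hk (by simpa using Sum.inl_injective (hf e))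
  have rejected_on_top : ∀ k : Fin 3, k ≠ 0 → ∀ b, b ≠ m + k + 1 →
      f (.inr b) < f (.inr (m + k + 1)) := fun k hk b hb =>
    lt_of_linearlyConsistent hf hlc (below_top k hk) (by simp [app5])
      (by simpa [app5, add_assoc] using hk) hb
  have h₁ : f (.inr m) < f (.inr (m + 2)) := by
    simpa [add_assoc] using rejected_on_top 1 (by decide) m (by simp [add_assoc])
  have h₂ : f (.inr (m + 2)) < f (.inr m) := by
    simpa [add_assoc] using rejected_on_top 2 (by decide) (m + 2) (by simp [add_assoc])
  exact lt_asymm h₁ h₂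
end

section
/- Consider the 1D-Euclidean election with candidates a, b, c, d, e at positions 0, 3, 6, 9, 12 and voters v1, v2, v3, v4 at positions 2, 5, 7, 10, where each voter ranks candidates by increasing distance, and committee size k = 2. The committee {b, d} (which is elected by the Monroe rule) does not belong to the core: the coalition S = {v2, v3} with T = {c} witnesses the core violation. -/
open Function Finset

/-- Positions of the candidates `a,b,c,d,e` (as `0,1,2,3,4 : Fin 5`). -/
noncomputable def cpos6 : Fin 5 → ℝ := ![0, 3, 6, 9, 12]

/-- Positions of the voters `v1,v2,v3,v4` (as `0,1,2,3 : Fin 4`). -/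
noncomputable def vpos6 : Fin 4 → ℝ := ![2, 5, 7, 10]

open scoped Classical in
/-- The rank (position, 0-indexed) of candidate `c` in voter `v`'s 1D-Euclidean
preference order: the number of candidates strictly closer to `v`. -/
noncomputable def rk6 (v : Fin 4) (c : Fin 5) : ℕ :=
  (Finset.univ.filter (fun d => |vpos6 v - cpos6 d| < |vpos6 v - cpos6 c|)).card

open scoped Classical in
/-- `A` is lexicographically strictly preferred to `B` by a voter with ranking `rk`. -/
def LexPref (rk : Fin 5 → ℕ) (A B : Finset (Fin 5)) : Prop :=
  ∃ σ : ℕ, (B.filter (fun c => rk c = σ)).card < (A.filter (fun c => rk c = σ)).card ∧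
    ∀ ρ < σ, (A.filter (fun c => rk c = ρ)).card = (B.filter (fun c => rk c = ρ)).card

/-! Both voters `v2, v3` have `c` as their unique closest candidate, so `{c}` already wins at
rank `0` against `{b, d}`, where neither member is ranked first; and `|{c}| * n = 4 ≤ k * |S| = 4`. -/

lemma lexPref_of_rank_zero {rk : Fin 5 → ℕ} {A B : Finset (Fin 5)} {c : Fin 5}
    (hcA : c ∈ A) (hc : rk c = 0) (hB : ∀ b ∈ B, rk b ≠ 0) : LexPref rk A B := by
  refine ⟨0, ?_, fun ρ hρ => absurd hρ (Nat.not_lt_zero ρ)⟩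
  rw [filter_false_of_mem hB, card_empty, card_pos]
  exact ⟨c, mem_filter.2 ⟨hcA, hc⟩⟩

lemma rk6_eq_zero_iff {v : Fin 4} {c : Fin 5} :
    rk6 v c = 0 ↔ ∀ d, |vpos6 v - cpos6 c| ≤ |vpos6 v - cpos6 d| := by
  simp [rk6, filter_eq_empty_iff]

lemma lexPref_rk6_singleton_of_closest {v : Fin 4} {c : Fin 5} {B : Finset (Fin 5)}
    (hc : ∀ d ≠ c, |vpos6 v - cpos6 c| < |vpos6 v - cpos6 d|) (hcB : c ∉ B) :
    LexPref (rk6 v) {c} B := by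
  have hc0 : rk6 v c = 0 := rk6_eq_zero_iff.2 fun d => by
    rcases eq_or_ne d c with rfl | hd
    · exact le_rfl
    · exact (hc d hd).le
  refine lexPref_of_rank_zero (mem_singleton_self c) hc0 fun b hb hb0 => ?_
  have hbc : b ≠ c := ne_of_mem_of_not_mem hb hcB
  exact (rk6_eq_zero_iff.1 hb0 c).not_gt (hc b hbc)

lemma c_closest_to_v2_v3 :
    ∀ i ∈ ({1, 2} : Finset (Fin 4)), ∀ d ≠ (2 : Fin 5), |vpos6 i - cpos6 2| < |vpos6 i - cpos6 d| := by
  intro i hi d hd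
  fin_cases hi <;> fin_cases d <;> first
    | exact absurd rfl hd
    | norm_num [vpos6, cpos6, Matrix.cons_val_two, Matrix.cons_val_three, Matrix.cons_val_four,
        Matrix.vecHead, Matrix.vecTail, abs_of_nonneg, abs_of_nonpos]

lemma lexPref_c_over_bd : ∀ i ∈ ({1, 2} : Finset (Fin 4)), LexPref (rk6 i) {2} {1, 3} :=
  fun i hi => lexPref_rk6_singleton_of_closest (c_closest_to_v2_v3 i hi) (by decide)

/-- In the 1D-Euclidean election above with `k = 2`, the committee `{b, d}`
(elected by the Monroe rule) is not in the core: the coalition `S = {v2, v3}`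
with `T = {c}` witnesses the core violation. -/
theorem monroe_not_core :
    (({2} : Finset (Fin 5)).card * 4 ≤ 2 * ({1, 2} : Finset (Fin 4)).card) ∧
    (∀ i ∈ ({1, 2} : Finset (Fin 4)), LexPref (rk6 i) {2} {1, 3}) ∧
    ¬ (∀ (S : Finset (Fin 4)) (T : Finset (Fin 5)), T.card * 4 ≤ 2 * S.card →
        ∃ i ∈ S, ¬ LexPref (rk6 i) T ({1, 3} : Finset (Fin 5))) := by
  refine ⟨by decide, lexPref_c_over_bd, fun hcore => ?_⟩
  obtain ⟨i, hi, hbd⟩ := hcore {1, 2} {2} (by decide)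
  exact hbd (lexPref_c_over_bd i hi)
end

section
/- Every 1D-Euclidean election with strict preferences is recursive single-top-crossing (r-STC). -/
/-!
Sort the voters by position. On the line, the voters strictly closer to `q` than to `p` form an
open half-line bounded by the midpoint of `p` and `q`; so if `v₁` prefers `a` to `top v₂` while
`v₂` prefers `top v₂` to `a`, every voter to the right of `v₂` prefers `top v₂` to `a`.
-/

open Function

lemma abs_sub_lt_abs_sub_of_crossing {p q t₁ t₂ t₃ : ℝ} (h₁₂ : t₁ ≤ t₂) (h₂₃ : t₂ ≤ t₃)
    (h₁ : |t₁ - p| < |t₁ - q|) (h₂ : |t₂ - q| < |t₂ - p|) :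
    |t₃ - q| < |t₃ - p| := by
  rw [← sq_lt_sq] at h₁ h₂ ⊢
  nlinarith [sq_nonneg (t₁ - t₂), sq_nonneg (p - q), mul_nonneg (sub_nonneg.2 h₁₂) (sub_nonneg.2 h₂₃)]

lemma exists_injective_nat_of_lt_imp_le {V α : Type*} [Fintype V] [LinearOrder α] (f : V → α) :
    ∃ g : V → ℕ, Injective g ∧ ∀ u v, g u < g v → f u ≤ f v := by
  let e := Fintype.equivFin V
  let k : V → α ×ₗ ℕ := fun v => toLex (f v, e v)
  have hk : Injective k := fun u v h =>
    e.injective (Fin.val_injective (congrArg (fun p => (ofLex p).2) h))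
  let : LinearOrder V := LinearOrder.lift' k hk
  let r := Fintype.orderIsoFinOfCardEq V rfl
  refine ⟨fun v => r.symm v, fun u v h => r.symm.injective (Fin.val_injective h), fun u v h => ?_⟩
  have hkuv : k u < k v := r.symm.lt_iff_lt.1 h
  exact (Prod.Lex.lt_iff.1 hkuv).elim le_of_lt fun h => h.1.le

theorem euclidean_implies_rstc_general {V C : Type*} [Fintype V]
    (x : V → ℝ) (y : C → ℝ) :
    ∀ D : Finset C, D.Nonempty → ∃ g : V → ℕ, Injective g ∧
      ∀ v1 v2 v3 : V, g v1 < g v2 → g v2 < g v3 →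
        ∀ a ∈ D, ∀ ty ∈ D,
          (∀ c ∈ D, c ≠ ty → |x v2 - y ty| < |x v2 - y c|) →
          |x v1 - y a| < |x v1 - y ty| → |x v3 - y ty| < |x v3 - y a| := by
  intro D _
  obtain ⟨g, hg, hx⟩ := exists_injective_nat_of_lt_imp_le x
  refine ⟨g, hg, fun v1 v2 v3 h12 h23 a ha ty _ htop h1 => ?_⟩
  have hne : a ≠ ty := by
    rintro rfl
    exact lt_irrefl _ h1
  exact abs_sub_lt_abs_sub_of_crossing (hx _ _ h12) (hx _ _ h23) h1 (htop a ha hne)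

/-- Every 1D-Euclidean election with strict preferences is recursive
single-top-crossing (r-STC): for every subset `D` of candidates kept
(i.e. every subinstance obtained by removing candidates), the subinstance is
single-top-crossing. Voter `i` sits at `x i`, candidate `c` at `y c`, and
`a ≻_i b` iff `|x i - y a| < |x i - y b|`; all distances from a fixed voter
are pairwise distinct. -/
theorem euclidean_implies_rstc {V C : Type*} [Fintype V] [Fintype C]
    (x : V → ℝ) (y : C → ℝ)
    (hdist : ∀ (i : V) (a b : C), a ≠ b → |x i - y a| ≠ |x i - y b|) :
    ∀ D : Finset C, D.Nonempty → ∃ g : V → ℕ, Injective g ∧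
      ∀ v1 v2 v3 : V, g v1 < g v2 → g v2 < g v3 →
        ∀ a ∈ D, ∀ ty ∈ D,
          (∀ c ∈ D, c ≠ ty → |x v2 - y ty| < |x v2 - y c|) →
          |x v1 - y a| < |x v1 - y ty| → |x v3 - y ty| < |x v3 - y a| :=
  euclidean_implies_rstc_general x y
end
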